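/- Let M ≥ 1 and t ∈ {1, …, M} be integers, 0 < φ < 2, 0 ≤ η_min ≤ η_max reals, and 0 < λ_l ≤ λ ≤ λ_u reals with η_max·λ ≤ 1. Let η_m (1 ≤ m ≤ M) be the UBA learning rates, set a = 2φ + (2 − φ)π, c = (2 − φ)π/M, and τ = 4·λ_l·(η_max − η_min)·(1 + cos((2t − 1)π/(2M)))·M/((2 − φ)π). Then a − c·(t − 1/2) > 0 and ∏_{m=1}^{t} (1 − η_m λ)² ≤ exp(−2λ·η_min·t) · ((a − c·(t − 1/2))/(a + c/2))^τ. -/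
import Mathlib

set_option maxHeartbeats 1000000


open Real Finset

/-- The UBA learning rate at step `m` of a phase of length `M`. -/
noncomputable def ubaRate (M : ℕ) (ηmin ηmax φ : ℝ) (m : ℕ) : ℝ :=
  (ηmax - ηmin) * (2 * (1 + Real.cos ((2 * (m : ℝ) - 1) * Real.pi / (2 * (M : ℝ))))) /
    (2 * φ + (2 - φ) * (1 + Real.cos ((2 * (m : ℝ) - 1) * Real.pi / (2 * (M : ℝ))))) + ηmin

lemma one_add_cos_le_pi_sub (x : ℝ) (h0 : 0 ≤ x) (h1 : x ≤ Real.pi) :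
    1 + Real.cos x ≤ Real.pi - x := by
  have hps : Real.cos (Real.pi - x) = - Real.cos x := Real.cos_pi_sub x
  have hq : 1 - (Real.pi - x) ^ 2 / 2 ≤ Real.cos (Real.pi - x) :=
    Real.one_sub_sq_div_two_le_cos
  have hm : -1 ≤ Real.cos (Real.pi - x) := Real.neg_one_le_cos _
  rcases le_or_gt (Real.pi - x) 2 with h' | h'
  · nlinarith
  · nlinarith

/-- Lemma 1, case `0 < φ < 2`: bound on the squared contraction factor along the UBA
schedule for an eigenvalue `λ ∈ [λ_l, λ_u]` of the local Hessian. -/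
theorem uba_contraction_bound_phi_lt_two
    (M t : ℕ) (hM : 1 ≤ M) (ht1 : 1 ≤ t) (ht2 : t ≤ M)
    (φ : ℝ) (hφ0 : 0 < φ) (hφ2 : φ < 2) (ηmin ηmax : ℝ) (h0 : 0 ≤ ηmin) (h1 : ηmin ≤ ηmax)
    (lamL lam lamU : ℝ) (hl : 0 < lamL) (hl1 : lamL ≤ lam) (hl2 : lam ≤ lamU)
    (hstep : ηmax * lam ≤ 1) :
    0 < (2 * φ + (2 - φ) * Real.pi) - ((2 - φ) * Real.pi / (M : ℝ)) * ((t : ℝ) - 1 / 2) ∧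
    ∏ m ∈ Finset.Icc 1 t, (1 - ubaRate M ηmin ηmax φ m * lam) ^ 2 ≤
      Real.exp (-2 * lam * ηmin * (t : ℝ)) *
        (((2 * φ + (2 - φ) * Real.pi) - ((2 - φ) * Real.pi / (M : ℝ)) * ((t : ℝ) - 1 / 2)) /
            ((2 * φ + (2 - φ) * Real.pi) + ((2 - φ) * Real.pi / (M : ℝ)) / 2)) ^
          (4 * lamL * (ηmax - ηmin) *
            (1 + Real.cos ((2 * (t : ℝ) - 1) * Real.pi / (2 * (M : ℝ)))) * (M : ℝ) /
            ((2 - φ) * Real.pi)) := by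
  have hMpos : (0:ℝ) < (M:ℝ) := by exact_mod_cast hM
  have hπ : (0:ℝ) < Real.pi := Real.pi_pos
  have h2φ : (0:ℝ) < 2 - φ := by linarith
  have hlam : 0 < lam := lt_of_lt_of_le hl hl1
  have hηd : 0 ≤ ηmax - ηmin := by linarith
  -- abbreviations
  set a : ℝ := 2 * φ + (2 - φ) * Real.pi with hadef
  set c : ℝ := (2 - φ) * Real.pi / (M : ℝ) with hcdef
  set θ : ℕ → ℝ := fun m => (2 * (m:ℝ) - 1) * Real.pi / (2 * (M:ℝ)) with hθdef
  set b : ℕ → ℝ := fun m => a - c * ((m:ℝ) - 1/2) with hbdef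
  set τ : ℝ := 4 * lamL * (ηmax - ηmin) * (1 + Real.cos (θ t)) * (M : ℝ) /
      ((2 - φ) * Real.pi) with hτdef
  clear_value a c θ b τ
  have hcpos : 0 < c := by rw [hcdef]; positivity
  have hcM : c * (M:ℝ) = (2 - φ) * Real.pi := by rw [hcdef]; field_simp
  -- positivity of b on [0, M]
  have hbpos : ∀ m : ℕ, m ≤ M → 2 * φ + c / 2 ≤ b m := by
    intro m hm
    have hmM : (m:ℝ) ≤ (M:ℝ) := by exact_mod_cast hm
    have : c * (m:ℝ) ≤ c * (M:ℝ) := by nlinarith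
    simp only [hbdef, hadef]
    nlinarith [hcM]
  have hbpos' : ∀ m : ℕ, m ≤ M → 0 < b m := by
    intro m hm
    have := hbpos m hm
    linarith [hcpos, hφ0]
  -- b in terms of θ
  have hbθ : ∀ m : ℕ, b m = 2 * φ + (2 - φ) * (Real.pi - θ m) := by
    intro m
    simp only [hbdef, hadef, hcdef, hθdef]
    field_simp
    ring
  -- θ bounds
  have hθ0 : ∀ m : ℕ, 1 ≤ m → 0 ≤ θ m := by
    intro m hm
    have h1m : (1:ℝ) ≤ (m:ℝ) := by exact_mod_cast hm
    simp only [hθdef]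
    have : (0:ℝ) ≤ 2 * (m:ℝ) - 1 := by linarith
    positivity
  have hθπ : ∀ m : ℕ, m ≤ M → θ m ≤ Real.pi := by
    intro m hm
    have hmM : (m:ℝ) ≤ (M:ℝ) := by exact_mod_cast hm
    simp only [hθdef]
    rw [div_le_iff₀ (by positivity)]
    nlinarith
  have hθmono : ∀ m n : ℕ, m ≤ n → θ m ≤ θ n := by
    intro m n hmn
    have hmn' : (m:ℝ) ≤ (n:ℝ) := by exact_mod_cast hmn
    simp only [hθdef]
    rw [div_le_div_iff₀ (by positivity) (by positivity)]
    nlinarith [mul_nonneg (sub_nonneg.mpr hmn') (mul_pos hπ hMpos).le]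
  have hcos1 : ∀ m : ℕ, (0:ℝ) ≤ 1 + Real.cos (θ m) := fun m => by
    nlinarith [Real.neg_one_le_cos (θ m)]
  have hD : ∀ m : ℕ, 0 < 2 * φ + (2 - φ) * (1 + Real.cos (θ m)) := by
    intro m
    nlinarith [hcos1 m]
  have hrate_eq : ∀ m : ℕ, ubaRate M ηmin ηmax φ m =
      (ηmax - ηmin) * (2 * (1 + Real.cos (θ m))) /
        (2 * φ + (2 - φ) * (1 + Real.cos (θ m))) + ηmin := by
    intro m
    rw [hθdef]
    rfl
  have hrate_lb : ∀ m : ℕ, ηmin ≤ ubaRate M ηmin ηmax φ m := by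
    intro m
    rw [hrate_eq m]
    have : 0 ≤ (ηmax - ηmin) * (2 * (1 + Real.cos (θ m))) /
        (2 * φ + (2 - φ) * (1 + Real.cos (θ m))) :=
      div_nonneg (mul_nonneg hηd (by linarith [hcos1 m])) (le_of_lt (hD m))
    linarith
  have hrate_ub : ∀ m : ℕ, ubaRate M ηmin ηmax φ m ≤ ηmax := by
    intro m
    rw [hrate_eq m]
    have hfr : (ηmax - ηmin) * (2 * (1 + Real.cos (θ m))) /
        (2 * φ + (2 - φ) * (1 + Real.cos (θ m))) ≤ ηmax - ηmin := by
      rw [div_le_iff₀ (hD m)]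
      nlinarith [mul_nonneg hηd (mul_nonneg hφ0.le (sub_nonneg.2 (Real.cos_le_one (θ m))))]
    linarith
  -- first conjunct
  have hfst : 0 < a - c * ((t : ℝ) - 1 / 2) := by
    have := hbpos' t ht2
    rw [hbdef] at this
    exact this
  refine ⟨hfst, ?_⟩
  -- Step A: each factor is at most exp(-2 η_m λ)
  have hstepA : ∀ m : ℕ, (1 - ubaRate M ηmin ηmax φ m * lam) ^ 2 ≤
      Real.exp (-(2 * lam * ubaRate M ηmin ηmax φ m)) := by
    intro m
    set x := ubaRate M ηmin ηmax φ m * lam with hx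
    have hx0 : 0 ≤ x := mul_nonneg (le_trans h0 (hrate_lb m)) (le_of_lt hlam)
    have hx1 : x ≤ 1 := le_trans (mul_le_mul_of_nonneg_right (hrate_ub m) (le_of_lt hlam)) hstep
    have h1x : 0 ≤ 1 - x := by linarith
    have hle : 1 - x ≤ Real.exp (-x) := by
      have := Real.add_one_le_exp (-x)
      linarith
    calc (1 - x) ^ 2 ≤ Real.exp (-x) ^ 2 := pow_le_pow_left₀ h1x hle 2
      _ = Real.exp (-(2 * lam * ubaRate M ηmin ηmax φ m)) := by
          rw [sq, ← Real.exp_add]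
          congr 1
          rw [hx]; ring
  have hprodA : ∏ m ∈ Finset.Icc 1 t, (1 - ubaRate M ηmin ηmax φ m * lam) ^ 2 ≤
      Real.exp (-(∑ m ∈ Finset.Icc 1 t, 2 * lam * ubaRate M ηmin ηmax φ m)) := by
    have h1 : ∏ m ∈ Finset.Icc 1 t, (1 - ubaRate M ηmin ηmax φ m * lam) ^ 2 ≤
        ∏ m ∈ Finset.Icc 1 t, Real.exp (-(2 * lam * ubaRate M ηmin ηmax φ m)) :=
      Finset.prod_le_prod (fun m _ => sq_nonneg _) (fun m _ => hstepA m)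
    have h2 : ∏ m ∈ Finset.Icc 1 t, Real.exp (-(2 * lam * ubaRate M ηmin ηmax φ m)) =
        Real.exp (-(∑ m ∈ Finset.Icc 1 t, 2 * lam * ubaRate M ηmin ηmax φ m)) := by
      rw [← Real.exp_sum, Finset.sum_neg_distrib]
    rw [h2] at h1
    exact h1
  -- Step B: key bound on the sum of the learning rates
  have hkey : 2 * lam * ηmin * (t:ℝ) + τ * (Real.log (b 0) - Real.log (b t)) ≤
      ∑ m ∈ Finset.Icc 1 t, 2 * lam * ubaRate M ηmin ηmax φ m := by
    have hτ0 : 0 ≤ τ := by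
      rw [hτdef]
      apply div_nonneg _ (by positivity)
      have h4 : (0:ℝ) ≤ 4 * lamL := by linarith
      exact mul_nonneg (mul_nonneg (mul_nonneg h4 hηd) (hcos1 t)) hMpos.le
    have hτc : τ * c = 4 * lamL * (ηmax - ηmin) * (1 + Real.cos (θ t)) := by
      rw [hτdef, hcdef]
      field_simp
    rw [← Finset.Ico_add_one_right_eq_Icc, Finset.sum_Ico_eq_sum_range]
    try simp only [Nat.add_sub_cancel]
    have htel : Real.log (b 0) - Real.log (b t) =
        ∑ i ∈ Finset.range t, (Real.log (b i) - Real.log (b (i+1))) :=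
      (Finset.sum_range_sub' (fun i => Real.log (b i)) t).symm
    have hconst : 2 * lam * ηmin * (t:ℝ) = ∑ _i ∈ Finset.range t, 2 * lam * ηmin := by
      rw [Finset.sum_const, Finset.card_range, nsmul_eq_mul]
      ring
    rw [htel, Finset.mul_sum, hconst, ← Finset.sum_add_distrib]
    apply Finset.sum_le_sum
    intro i hi
    rw [Finset.mem_range] at hi
    have h1i : 1 + i = i + 1 := Nat.add_comm 1 i
    rw [h1i]
    have him : i + 1 ≤ M := by omega
    have hbi : 0 < b i := hbpos' i (by omega)
    have hbi1 : 0 < b (i+1) := hbpos' (i+1) him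
    have hdiff : b i - b (i+1) = c := by
      simp only [hbdef]
      push_cast
      ring
    have hlog : Real.log (b i) - Real.log (b (i+1)) ≤ c / b (i+1) := by
      have h := Real.log_le_sub_one_of_pos (div_pos hbi hbi1)
      rw [Real.log_div hbi.ne' hbi1.ne'] at h
      have heq : b i / b (i+1) - 1 = c / b (i+1) := by
        rw [div_sub_one hbi1.ne', hdiff]
      linarith
    have hDb : 2 * φ + (2 - φ) * (1 + Real.cos (θ (i+1))) ≤ b (i+1) := by
      rw [hbθ]
      have := one_add_cos_le_pi_sub (θ (i+1)) (hθ0 (i+1) (by omega)) (hθπ (i+1) him)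
      nlinarith
    have hcosmono : 1 + Real.cos (θ t) ≤ 1 + Real.cos (θ (i+1)) := by
      have := Real.cos_le_cos_of_nonneg_of_le_pi (hθ0 (i+1) (by omega)) (hθπ t ht2)
        (hθmono (i+1) t (by omega))
      linarith
    have hmid : τ * (c / b (i+1)) ≤
        2 * lam * ((ηmax - ηmin) * (2 * (1 + Real.cos (θ (i+1)))) /
          (2 * φ + (2 - φ) * (1 + Real.cos (θ (i+1))))) := by
      rw [← mul_div_assoc, hτc, ← mul_div_assoc]
      apply div_le_div₀ _ _ (hD (i+1)) hDb
      · nlinarith [mul_nonneg hηd (hcos1 (i+1))]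
      · nlinarith [mul_le_mul hl1 hcosmono (hcos1 t) hlam.le,
          mul_le_mul_of_nonneg_left (mul_le_mul hl1 hcosmono (hcos1 t) hlam.le) hηd]
    have hτlog : τ * (Real.log (b i) - Real.log (b (i+1))) ≤ τ * (c / b (i+1)) :=
      mul_le_mul_of_nonneg_left hlog hτ0
    have hfinal : 2 * lam * ubaRate M ηmin ηmax φ (i+1) =
        2 * lam * ηmin + 2 * lam * ((ηmax - ηmin) * (2 * (1 + Real.cos (θ (i+1)))) /
          (2 * φ + (2 - φ) * (1 + Real.cos (θ (i+1))))) := by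
      rw [hrate_eq (i+1)]
      ring
    rw [hfinal]
    linarith
  -- assembly
  have hbt : 0 < b t := hbpos' t ht2
  have hb0' : 0 < b 0 := hbpos' 0 (by omega)
  have hrpow : (b t / b 0) ^ τ = Real.exp (τ * (Real.log (b t) - Real.log (b 0))) := by
    rw [Real.rpow_def_of_pos (div_pos hbt hb0'), Real.log_div hbt.ne' hb0'.ne', mul_comm]
  have hmain : Real.exp (-(∑ m ∈ Finset.Icc 1 t, 2 * lam * ubaRate M ηmin ηmax φ m)) ≤
      Real.exp (-2 * lam * ηmin * (t:ℝ)) * (b t / b 0) ^ τ := by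
    rw [hrpow, ← Real.exp_add]
    apply Real.exp_le_exp.mpr
    have h2 : τ * (Real.log (b t) - Real.log (b 0)) =
        -(τ * (Real.log (b 0) - Real.log (b t))) := by ring
    have h3 : -2 * lam * ηmin * (t:ℝ) = -(2 * lam * ηmin * (t:ℝ)) := by ring
    rw [h2, h3]
    linarith [hkey]
  have e3 : a - c * ((t:ℝ) - 1/2) = b t := by rw [hbdef]
  have e4 : a + c / 2 = b 0 := by
    rw [hbdef]
    push_cast
    ring
  rw [e3, e4]
  exact le_trans hprodA hmain
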